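/- arXiv:2103.03757 — 6 statements merged into one kernel-verified Lean document; each statement's English description precedes it below -/
import Mathlib

section
/- Under the assumptions of the previous statement, for any finite unlabeled set 𝒰 of size n and finite labeled set ℒK on which both h and h' are ε-close to f in loss L, the empirical average (1/n)·Σ_{x ∈ 𝒰} L(h(x), h'(x)) ≤ (2kμ/n)·Σ_{x ∈ 𝒰} min_{x' ∈ ℒK} d(x, x') + 2ε. -/
theorem sum_div_card_le_of_forall_le {ι : Type*} (s : Finset ι) (g w : ι → ℝ) (c e : ℝ)
    (he : 0 ≤ e) (hg : ∀ i ∈ s, g i ≤ c * w i + e) :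
    (∑ i ∈ s, g i) / s.card ≤ c / s.card * ∑ i ∈ s, w i + e := by
  rcases s.eq_empty_or_nonempty with rfl | hs
  · simpa using he
  have hcard : (0 : ℝ) < s.card := by exact_mod_cast hs.card_pos
  have hsum : ∑ i ∈ s, g i ≤ c * ∑ i ∈ s, w i + s.card * e := by
    calc ∑ i ∈ s, g i ≤ ∑ i ∈ s, (c * w i + e) := Finset.sum_le_sum hg
      _ = c * ∑ i ∈ s, w i + s.card * e := by
        rw [Finset.sum_add_distrib, ← Finset.mul_sum, Finset.sum_const, nsmul_eq_mul]
  rw [div_le_iff₀ hcard]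
  calc ∑ i ∈ s, g i ≤ c * ∑ i ∈ s, w i + s.card * e := hsum
    _ = (c / s.card * ∑ i ∈ s, w i + e) * s.card := by field_simp

section LipschitzLoss

variable {X : Type*} [PseudoMetricSpace X] {k μ ε : ℝ} {L : ℝ → ℝ → ℝ}

theorem loss_le_mul_dist (hLlip : ∀ y y', L y y' ≤ μ * |y - y'|) (hμ : 0 ≤ μ)
    {g : X → ℝ} (hg : ∀ a b, |g a - g b| ≤ k * dist a b) (a b : X) :
    L (g a) (g b) ≤ k * μ * dist a b :=
  calc L (g a) (g b) ≤ μ * |g a - g b| := hLlip _ _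
    _ ≤ μ * (k * dist a b) := mul_le_mul_of_nonneg_left (hg a b) hμ
    _ = k * μ * dist a b := by ring

/-- Route `h x → h x' → f x' → h' x' → h' x` through the anchor `x'`. -/
theorem loss_le_of_close_at (hLsymm : ∀ y y', L y y' = L y' y)
    (hLtri : ∀ a b c, L a c ≤ L a b + L b c) (hLlip : ∀ y y', L y y' ≤ μ * |y - y'|)
    (hμ : 0 ≤ μ) {h h' f : X → ℝ} (hh : ∀ a b, |h a - h b| ≤ k * dist a b)
    (hh' : ∀ a b, |h' a - h' b| ≤ k * dist a b) {x' : X}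
    (hhx' : L (h x') (f x') ≤ ε) (hh'x' : L (h' x') (f x') ≤ ε) (x : X) :
    L (h x) (h' x) ≤ 2 * k * μ * dist x x' + 2 * ε := by
  have hfar : L (h x) (h x') ≤ k * μ * dist x x' := loss_le_mul_dist hLlip hμ hh x x'
  have hfar' : L (h' x') (h' x) ≤ k * μ * dist x x' := by
    rw [dist_comm]; exact loss_le_mul_dist hLlip hμ hh' x' x
  have hmid : L (f x') (h' x') ≤ ε := hLsymm (f x') _ ▸ hh'x'
  linarith [hLtri (h x) (h x') (h' x), hLtri (h x') (f x') (h' x), hLtri (f x') (h' x') (h' x)]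

end LipschitzLoss

/-- Empirical average version of the pointwise bound. -/
theorem stmt2 {X : Type*} [MetricSpace X] (k μ ε : ℝ) (L : ℝ → ℝ → ℝ)
    (hLnonneg : ∀ y y', 0 ≤ L y y')
    (hLsymm : ∀ y y', L y y' = L y' y)
    (hLtri : ∀ a b c, L a c ≤ L a b + L b c)
    (hLlip : ∀ y y', L y y' ≤ μ * |y - y'|)
    (h h' f : X → ℝ)
    (hh : ∀ a b, |h a - h b| ≤ k * dist a b)
    (hh' : ∀ a b, |h' a - h' b| ≤ k * dist a b)
    (LK : Finset X) (hLK : LK.Nonempty) (U : Finset X)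
    (he1 : ∀ x' ∈ LK, L (h x') (f x') < ε)
    (he2 : ∀ x' ∈ LK, L (h' x') (f x') < ε) :
    (∑ x ∈ U, L (h x) (h' x)) / U.card ≤
      (2 * k * μ / U.card) * ∑ x ∈ U, LK.inf' hLK (fun x' => dist x x') + 2 * ε := by
  have hμ : 0 ≤ μ := by simpa using (hLnonneg 0 1).trans (hLlip 0 1)
  have hε : 0 ≤ 2 * ε := by
    obtain ⟨x', hx'⟩ := hLK
    linarith [hLnonneg (h x') (f x'), he1 x' hx']
  refine sum_div_card_le_of_forall_le U _ _ _ _ hε fun x _ => ?_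
  obtain ⟨x', hx', hmin⟩ := LK.exists_mem_eq_inf' hLK (fun x' => dist x x')
  rw [hmin]
  exact loss_le_of_close_at hLsymm hLtri hLlip hμ hh hh' (he1 x' hx').le (he2 x' hx').le x
end

section
/- The localized empirical discrepancy is bounded: disc_{H_ε^K}(Q̂K, P̂) = max_{h,h' ∈ H_ε^K} |L_Q̂K(h,h') − L_P̂(h,h')| ≤ (2kμ/n)·Σ_{x ∈ 𝒰} d(x, ℒK) + 2ε, where d(x, ℒK) = min_{x' ∈ ℒK} d(x, x'). -/
/-!
Both empirical averages are nonnegative, so their difference is bounded by the larger one.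
On `ℒK` any two hypotheses of `H_ε^K` are `2ε`-close, by the triangle inequality through `f`.
At an unlabeled point `x` with nearest labeled point `x'`, going through `x'` gives
`L(h x, h' x) ≤ L(h x, h x') + L(h x', h' x') + L(h' x', h' x) ≤ 2kμ d(x, ℒK) + 2ε`.
-/

open Finset

lemma sum_div_card_le_sum_div_card_add {ι : Type*} {s : Finset ι} {g a : ι → ℝ} {c : ℝ}
    (hc : 0 ≤ c) (hg : ∀ x ∈ s, g x ≤ a x + c) :
    (∑ x ∈ s, g x) / #s ≤ (∑ x ∈ s, a x) / #s + c := by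
  rcases s.eq_empty_or_nonempty with rfl | hs
  · simpa using hc
  have hcard : (0 : ℝ) < #s := by exact_mod_cast hs.card_pos
  calc (∑ x ∈ s, g x) / #s ≤ (∑ x ∈ s, (a x + c)) / #s := by
          gcongr with x hx; exact hg x hx
    _ = (∑ x ∈ s, a x) / #s + c := by
      rw [sum_add_distrib, sum_const, nsmul_eq_mul]
      field_simp

section Loss

variable {L : ℝ → ℝ → ℝ} {μ : ℝ}

lemma nonneg_of_loss_le_mul_abs_sub (hLnonneg : ∀ y y', 0 ≤ L y y')
    (hLlip : ∀ y y', L y y' ≤ μ * |y - y'|) : 0 ≤ μ := by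
  simpa using (hLnonneg 1 0).trans (hLlip 1 0)

lemma loss_lt_add_of_loss_lt_of_loss_lt (hLsymm : ∀ y y', L y y' = L y' y)
    (hLtri : ∀ a b c, L a c ≤ L a b + L b c) {a b c ε δ : ℝ}
    (ha : L a c < ε) (hb : L b c < δ) : L a b < ε + δ := by
  have := hLtri a c b
  rw [hLsymm c b] at this
  linarith

variable {X : Type*} [PseudoMetricSpace X] {k : ℝ}

lemma loss_comp_le_mul_dist (hμ : 0 ≤ μ) (hLlip : ∀ y y', L y y' ≤ μ * |y - y'|)
    {h : X → ℝ} (hh : ∀ a b, |h a - h b| ≤ k * dist a b) (a b : X) :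
    L (h a) (h b) ≤ k * μ * dist a b :=
  calc L (h a) (h b) ≤ μ * |h a - h b| := hLlip _ _
    _ ≤ μ * (k * dist a b) := by gcongr; exact hh a b
    _ = k * μ * dist a b := by ring

/-- `k` is not assumed nonnegative; the sign comes from `0 ≤ L (h x) (h x') ≤ k μ d(x, x')`. -/
lemma mul_inf'_dist_nonneg (hLnonneg : ∀ y y', 0 ≤ L y y')
    (hLlip : ∀ y y', L y y' ≤ μ * |y - y'|) {h : X → ℝ}
    (hh : ∀ a b, |h a - h b| ≤ k * dist a b) {s : Finset X} (hs : s.Nonempty) (x : X) :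
    0 ≤ k * μ * s.inf' hs (dist x ·) := by
  obtain ⟨x', -, hmin⟩ := exists_mem_eq_inf' hs (dist x ·)
  rw [hmin]
  exact (hLnonneg _ _).trans
    (loss_comp_le_mul_dist (nonneg_of_loss_le_mul_abs_sub hLnonneg hLlip) hLlip hh x x')

lemma loss_le_of_loss_lt_at (hμ : 0 ≤ μ) (hLsymm : ∀ y y', L y y' = L y' y)
    (hLtri : ∀ a b c, L a c ≤ L a b + L b c) (hLlip : ∀ y y', L y y' ≤ μ * |y - y'|)
    {ε : ℝ} {f h h' : X → ℝ} (hh : ∀ a b, |h a - h b| ≤ k * dist a b)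
    (hh' : ∀ a b, |h' a - h' b| ≤ k * dist a b) {x' : X}
    (hx' : L (h x') (f x') < ε) (hx'' : L (h' x') (f x') < ε) (x : X) :
    L (h x) (h' x) ≤ 2 * k * μ * dist x x' + 2 * ε := by
  have hmid := loss_lt_add_of_loss_lt_of_loss_lt hLsymm hLtri hx' hx''
  have hleft := loss_comp_le_mul_dist hμ hLlip hh x x'
  have hright := loss_comp_le_mul_dist hμ hLlip hh' x' x
  rw [dist_comm x' x] at hright
  calc L (h x) (h' x) ≤ L (h x) (h x') + L (h x') (h' x) := hLtri _ _ _
    _ ≤ L (h x) (h x') + (L (h x') (h' x') + L (h' x') (h' x)) := by gcongr; exact hLtri _ _ _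
    _ ≤ 2 * k * μ * dist x x' + 2 * ε := by linarith

lemma loss_le_inf'_dist_add (hμ : 0 ≤ μ) (hLsymm : ∀ y y', L y y' = L y' y)
    (hLtri : ∀ a b c, L a c ≤ L a b + L b c) (hLlip : ∀ y y', L y y' ≤ μ * |y - y'|)
    {ε : ℝ} {f h h' : X → ℝ} (hh : ∀ a b, |h a - h b| ≤ k * dist a b)
    (hh' : ∀ a b, |h' a - h' b| ≤ k * dist a b) {s : Finset X} (hs : s.Nonempty)
    (hfh : ∀ x' ∈ s, L (h x') (f x') < ε) (hfh' : ∀ x' ∈ s, L (h' x') (f x') < ε)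
    (x : X) :
    L (h x) (h' x) ≤ 2 * k * μ * s.inf' hs (dist x ·) + 2 * ε := by
  obtain ⟨x', hx', hmin⟩ := exists_mem_eq_inf' hs (dist x ·)
  rw [hmin]
  exact loss_le_of_loss_lt_at hμ hLsymm hLtri hLlip hh hh' (hfh x' hx') (hfh' x' hx') x

end Loss

theorem stmt3_general {X : Type*} [MetricSpace X] (k μ ε : ℝ) (L : ℝ → ℝ → ℝ)
    (hLnonneg : ∀ y y', 0 ≤ L y y')
    (hLsymm : ∀ y y', L y y' = L y' y)
    (hLtri : ∀ a b c, L a c ≤ L a b + L b c)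
    (hLlip : ∀ y y', L y y' ≤ μ * |y - y'|)
    (H : Set (X → ℝ))
    (hHlip : ∀ h ∈ H, ∀ a b, |h a - h b| ≤ k * dist a b)
    (f : X → ℝ)
    (LK : Finset X) (hLK : LK.Nonempty) (U : Finset X)
    (Hloc : Set (X → ℝ))
    (hHloc : Hloc = {h | h ∈ H ∧ ∀ x ∈ LK, L (h x) (f x) < ε})
    (D : ℝ)
    (hattain : ∃ h ∈ Hloc, ∃ h' ∈ Hloc,
      D = |(∑ x ∈ LK, L (h x) (h' x)) / LK.card - (∑ x ∈ U, L (h x) (h' x)) / U.card|) :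
    D ≤ (2 * k * μ / U.card) * ∑ x ∈ U, LK.inf' hLK (fun x' => dist x x') + 2 * ε := by
  subst hHloc
  obtain ⟨h, ⟨hH, hfh⟩, h', ⟨hH', hfh'⟩, rfl⟩ := hattain
  have hμ := nonneg_of_loss_le_mul_abs_sub hLnonneg hLlip
  have hε : 0 ≤ ε := let ⟨x, hx⟩ := hLK; (hLnonneg _ _).trans (hfh x hx).le
  simp_rw [mul_sum, div_mul_eq_mul_div, ← sum_div]
  have hLK_avg : (∑ x ∈ LK, L (h x) (h' x)) / LK.card ≤ 2 * ε := by
    simpa using sum_div_card_le_sum_div_card_add (a := 0) (by positivity) fun x hx => by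
      simpa [two_mul] using
        (loss_lt_add_of_loss_lt_of_loss_lt hLsymm hLtri (hfh x hx) (hfh' x hx)).le
  have hU_avg := sum_div_card_le_sum_div_card_add (s := U) (by positivity) fun x _ =>
    loss_le_inf'_dist_add hμ hLsymm hLtri hLlip (hHlip h hH) (hHlip h' hH') hLK hfh hfh' x
  have hT : 0 ≤ (∑ x ∈ U, 2 * k * μ * LK.inf' hLK (dist x ·)) / U.card :=
    div_nonneg (sum_nonneg fun x _ => by
      linarith [mul_inf'_dist_nonneg hLnonneg hLlip (hHlip h hH) hLK x]) (Nat.cast_nonneg _)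
  have hL_avg_nonneg : ∀ s : Finset X, 0 ≤ (∑ x ∈ s, L (h x) (h' x)) / s.card := fun s =>
    div_nonneg (sum_nonneg fun _ _ => hLnonneg _ _) (Nat.cast_nonneg _)
  exact abs_sub_le_of_nonneg_of_le (hL_avg_nonneg LK) (by linarith) (hL_avg_nonneg U) hU_avg

/-- The localized empirical discrepancy (its attained maximum `D`) is bounded by
`(2kμ/n) Σ_{x ∈ 𝒰} d(x, ℒK) + 2ε`. -/
theorem stmt3 {X : Type*} [MetricSpace X] (k μ ε : ℝ) (L : ℝ → ℝ → ℝ)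
    (hLnonneg : ∀ y y', 0 ≤ L y y')
    (hLsymm : ∀ y y', L y y' = L y' y)
    (hLtri : ∀ a b c, L a c ≤ L a b + L b c)
    (hLlip : ∀ y y', L y y' ≤ μ * |y - y'|)
    (hLrefl : ∀ y, L y y = 0)
    (H : Set (X → ℝ))
    (hHlip : ∀ h ∈ H, ∀ a b, |h a - h b| ≤ k * dist a b)
    (f : X → ℝ) (hf : f ∈ H)
    (LK : Finset X) (hLK : LK.Nonempty) (U : Finset X)
    (Hloc : Set (X → ℝ))
    (hHloc : Hloc = {h | h ∈ H ∧ ∀ x ∈ LK, L (h x) (f x) < ε})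
    (D : ℝ)
    (hattain : ∃ h ∈ Hloc, ∃ h' ∈ Hloc,
      D = |(∑ x ∈ LK, L (h x) (h' x)) / LK.card - (∑ x ∈ U, L (h x) (h' x)) / U.card|)
    (hub : ∀ h ∈ Hloc, ∀ h' ∈ Hloc,
      |(∑ x ∈ LK, L (h x) (h' x)) / LK.card - (∑ x ∈ U, L (h x) (h' x)) / U.card| ≤ D) :
    D ≤ (2 * k * μ / U.card) * ∑ x ∈ U, LK.inf' hLK (fun x' => dist x x') + 2 * ε :=
  stmt3_general k μ ε L hLnonneg hLsymm hLtri hLlip H hHlip f LK hLK U Hloc hHloc D hattain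
end

section
/- Let h be a k-Lipschitz function, ε ≥ 0, and ν > 0. If for all x' ∈ ℒK, L(h(x'), f(x')) < ε, and L satisfies L(y,y') ≥ ν|y − y'| (for y ≠ y' in the relevant image), and L is increasing in |y − y'|, then for all x ∈ X, h(x) ≤ d̃₊(x, ℒK) + ε/ν. -/
lemma le_add_div_of_mul_abs_sub_lt {a b ε ν : ℝ} (hν : 0 < ν) (h : ν * |a - b| < ε) :
    a ≤ b + ε / ν := by
  have hab : |a - b| ≤ ε / ν := (le_div_iff₀' hν).mpr h.le
  linarith [le_abs_self (a - b)]

theorem stmt7_general {X : Type*} [MetricSpace X] (k ε ν : ℝ) (L : ℝ → ℝ → ℝ)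
    (hν : 0 < ν)
    (hLlow : ∀ y y', ν * |y - y'| ≤ L y y')
    (f h : X → ℝ)
    (hh : ∀ a b, |h a - h b| ≤ k * dist a b)
    (LK : Finset X) (hLK : LK.Nonempty)
    (he : ∀ x' ∈ LK, L (h x') (f x') < ε)
    (x : X) :
    h x ≤ LK.inf' hLK (fun x' => f x' + k * dist x x') + ε / ν := by
  suffices ∀ x' ∈ LK, h x - ε / ν ≤ f x' + k * dist x x' from
    sub_le_iff_le_add.mp (LK.le_inf' hLK _ this)
  intro x' hx'
  have hfit : h x' ≤ f x' + ε / ν :=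
    le_add_div_of_mul_abs_sub_lt hν ((hLlow _ _).trans_lt (he x' hx'))
  have hlip : h x - h x' ≤ k * dist x x' := (abs_sub_le_iff.mp (hh x x')).1
  linarith

/-- Upper bound on localized hypotheses via the upper envelope: `h(x) ≤ d̃₊(x) + ε/ν`. -/
theorem stmt7 {X : Type*} [MetricSpace X] (k ε ν : ℝ) (L : ℝ → ℝ → ℝ)
    (hε : 0 ≤ ε) (hν : 0 < ν)
    (hLlow : ∀ y y', ν * |y - y'| ≤ L y y')
    (hLmono : ∀ a b c d : ℝ, |a - b| ≤ |c - d| → L a b ≤ L c d)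
    (f h : X → ℝ)
    (hh : ∀ a b, |h a - h b| ≤ k * dist a b)
    (LK : Finset X) (hLK : LK.Nonempty)
    (he : ∀ x' ∈ LK, L (h x') (f x') < ε)
    (x : X) :
    h x ≤ LK.inf' hLK (fun x' => f x' + k * dist x x') + ε / ν :=
  stmt7_general k ε ν L hν hLlow f h hh LK hLK he x
end

section
/- For any pair of k-Lipschitz hypotheses h, h' which are ε-close to f on ℒK in a loss L that is symmetric, μ-Lipschitz, increasing in |y−y'|, satisfies the triangle inequality, and satisfies L(y,y') ≥ ν|y−y'|, we have for each x: L(h(x), h'(x)) ≤ L(d̃₊(x,ℒK), d̃₋(x,ℒK)) + 2με/ν. -/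
/-!
Being `ε`-close in `L ≥ ν|·|`, a hypothesis is `ε/ν`-close to `f` on `ℒK`; being `k`-Lipschitz, its
value at `x` then lies between the envelopes `d̃₋(x) - ε/ν` and `d̃₊(x) + ε/ν`. Hence
`|h x - h' x| ≤ |d̃₊(x) - d̃₋(x)| + 2ε/ν`, and monotonicity, the triangle inequality and the
`μ`-Lipschitz bound of `L` turn this into the claim.
-/

section Loss

variable {L : ℝ → ℝ → ℝ} {μ ν ε : ℝ}

theorem abs_sub_le_div_of_loss_lt (hν : 0 < ν) (hLlow : ∀ y y', ν * |y - y'| ≤ L y y')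
    {a b : ℝ} (hab : L a b < ε) : |a - b| ≤ ε / ν := by
  rw [le_div_iff₀ hν, mul_comm]
  exact (hLlow a b).trans hab.le

/-- Pass through `L 0 (|a - b| + s)` and split it at `|a - b|`. -/
theorem loss_le_add_of_abs_sub_le (hLtri : ∀ a b c, L a c ≤ L a b + L b c)
    (hLlip : ∀ y y', L y y' ≤ μ * |y - y'|)
    (hLmono : ∀ a b c d : ℝ, |a - b| ≤ |c - d| → L a b ≤ L c d)
    {u v a b s : ℝ} (hs : 0 ≤ s) (huv : |u - v| ≤ |a - b| + s) :
    L u v ≤ L a b + μ * s := by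
  set t := |a - b|
  have ht : 0 ≤ t := abs_nonneg _
  calc L u v ≤ L 0 (t + s) :=
        hLmono _ _ _ _ (by rwa [zero_sub, abs_neg, abs_of_nonneg (add_nonneg ht hs)])
    _ ≤ L 0 t + L t (t + s) := hLtri _ _ _
    _ ≤ L a b + μ * s := by
        gcongr
        · exact hLmono _ _ _ _ (by rw [zero_sub, abs_neg, abs_abs])
        · simpa [abs_of_nonneg hs] using hLlip t (t + s)

end Loss

theorem apply_mem_Icc_envelopes {X : Type*} [PseudoMetricSpace X] {k r : ℝ} {f g : X → ℝ}
    (hg : ∀ a b, |g a - g b| ≤ k * dist a b) {LK : Finset X} (hLK : LK.Nonempty)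
    (hgf : ∀ x' ∈ LK, |g x' - f x'| ≤ r) (x : X) :
    g x ∈ Set.Icc (LK.sup' hLK (fun x' => f x' - k * dist x x') - r)
      (LK.inf' hLK (fun x' => f x' + k * dist x x') + r) := by
  constructor
  · rw [sub_le_iff_le_add]
    refine Finset.sup'_le _ _ fun x' hx' => ?_
    linarith [(abs_le.1 (hg x x')).1, (abs_le.1 (hgf x' hx')).1]
  · rw [← sub_le_iff_le_add]
    refine Finset.le_inf' _ _ fun x' hx' => ?_
    linarith [(abs_le.1 (hg x x')).2, (abs_le.1 (hgf x' hx')).2]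

theorem abs_sub_le_of_mem_Icc {u v a b r : ℝ} (hu : u ∈ Set.Icc (b - r) (a + r))
    (hv : v ∈ Set.Icc (b - r) (a + r)) : |u - v| ≤ |a - b| + 2 * r := by
  have := le_abs_self (a - b)
  rw [abs_le]
  constructor <;> linarith [hu.1, hu.2, hv.1, hv.2]

theorem stmt8_general {X : Type*} [MetricSpace X] (k μ ε ν : ℝ) (L : ℝ → ℝ → ℝ)
    (hε : 0 ≤ ε) (hν : 0 < ν)
    (hLtri : ∀ a b c, L a c ≤ L a b + L b c)
    (hLlip : ∀ y y', L y y' ≤ μ * |y - y'|)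
    (hLlow : ∀ y y', ν * |y - y'| ≤ L y y')
    (hLmono : ∀ a b c d : ℝ, |a - b| ≤ |c - d| → L a b ≤ L c d)
    (f h h' : X → ℝ)
    (hh : ∀ a b, |h a - h b| ≤ k * dist a b)
    (hh' : ∀ a b, |h' a - h' b| ≤ k * dist a b)
    (LK : Finset X) (hLK : LK.Nonempty)
    (he1 : ∀ x' ∈ LK, L (h x') (f x') < ε)
    (he2 : ∀ x' ∈ LK, L (h' x') (f x') < ε)
    (x : X) :
    L (h x) (h' x) ≤
      L (LK.inf' hLK (fun x' => f x' + k * dist x x'))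
        (LK.sup' hLK (fun x' => f x' - k * dist x x'))
      + 2 * μ * ε / ν := by
  have hclose : ∀ g : X → ℝ, (∀ x' ∈ LK, L (g x') (f x') < ε) → ∀ x' ∈ LK, |g x' - f x'| ≤ ε / ν :=
    fun g hg x' hx' => abs_sub_le_div_of_loss_lt hν hLlow (hg x' hx')
  have hx := abs_sub_le_of_mem_Icc (apply_mem_Icc_envelopes hh hLK (hclose h he1) x)
    (apply_mem_Icc_envelopes hh' hLK (hclose h' he2) x)
  calc L (h x) (h' x) ≤ _ + μ * (2 * (ε / ν)) :=
        loss_le_add_of_abs_sub_le hLtri hLlip hLmono (by positivity) hx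
    _ = _ := by ring

/-- Pointwise bound in terms of the envelopes:
`L(h(x), h'(x)) ≤ L(d̃₊(x), d̃₋(x)) + 2με/ν`. -/
theorem stmt8 {X : Type*} [MetricSpace X] (k μ ε ν : ℝ) (L : ℝ → ℝ → ℝ)
    (hε : 0 ≤ ε) (hν : 0 < ν)
    (hLnonneg : ∀ y y', 0 ≤ L y y')
    (hLsymm : ∀ y y', L y y' = L y' y)
    (hLtri : ∀ a b c, L a c ≤ L a b + L b c)
    (hLlip : ∀ y y', L y y' ≤ μ * |y - y'|)
    (hLlow : ∀ y y', ν * |y - y'| ≤ L y y')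
    (hLmono : ∀ a b c d : ℝ, |a - b| ≤ |c - d| → L a b ≤ L c d)
    (f h h' : X → ℝ)
    (hh : ∀ a b, |h a - h b| ≤ k * dist a b)
    (hh' : ∀ a b, |h' a - h' b| ≤ k * dist a b)
    (LK : Finset X) (hLK : LK.Nonempty)
    (he1 : ∀ x' ∈ LK, L (h x') (f x') < ε)
    (he2 : ∀ x' ∈ LK, L (h' x') (f x') < ε)
    (x : X) :
    L (h x) (h' x) ≤
      L (LK.inf' hLK (fun x' => f x' + k * dist x x'))
        (LK.sup' hLK (fun x' => f x' - k * dist x x'))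
      + 2 * μ * ε / ν :=
  stmt8_general k μ ε ν L hε hν hLtri hLlip hLlow hLmono f h h' hh hh' LK hLK he1 he2 x
end

section
/- At ε = 0, the criterion of Theorem 2 is tighter than that of Theorem 1: (1/n) Σ_{x ∈ 𝒰} L(d̃₊(x,ℒK), d̃₋(x,ℒK)) ≤ (2kμ/n) Σ_{x ∈ 𝒰} d(x, ℒK), where L is symmetric, μ-Lipschitz, satisfies the triangle inequality and L(y,y)=0, and f is k-Lipschitz. -/
/-!
Since `f` is `k`-Lipschitz, `d̃₋ ≤ d̃₊`; evaluating both envelopes at a point `x₀ ∈ ℒK`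
nearest to `x` gives `d̃₊(x) - d̃₋(x) ≤ (f x₀ + k d(x, x₀)) - (f x₀ - k d(x, x₀)) = 2k d(x, ℒK)`.
The `μ`-Lipschitz bound on `L` then gives `L(d̃₊(x), d̃₋(x)) ≤ 2kμ d(x, ℒK)` pointwise, and averaging over `𝒰` gives the claim.
-/

section Envelopes

variable {X : Type*} [PseudoMetricSpace X]

-- For `f` that is `k`-Lipschitz on `s`, these are the largest and the smallest `k`-Lipschitz
-- extensions of `f|s` (McShane–Whitney), the `d̃₊(·, ℒK)` and `d̃₋(·, ℒK)` of the paper.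
noncomputable def upperEnvelope (s : Finset X) (hs : s.Nonempty) (f : X → ℝ) (k : ℝ) (x : X) :
    ℝ :=
  s.inf' hs fun x' => f x' + k * dist x x'

noncomputable def lowerEnvelope (s : Finset X) (hs : s.Nonempty) (f : X → ℝ) (k : ℝ) (x : X) :
    ℝ :=
  s.sup' hs fun x' => f x' - k * dist x x'

variable {s : Finset X} (hs : s.Nonempty) {f : X → ℝ} {k : ℝ}

theorem lowerEnvelope_le_upperEnvelope (hk : 0 ≤ k)
    (hf : ∀ a ∈ s, ∀ b ∈ s, f a - f b ≤ k * dist a b) (x : X) :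
    lowerEnvelope s hs f k x ≤ upperEnvelope s hs f k x := by
  refine Finset.sup'_le _ _ fun b hb => Finset.le_inf' _ _ fun a ha => ?_
  have hba : k * dist b a ≤ k * (dist x b + dist x a) :=
    mul_le_mul_of_nonneg_left (dist_triangle_left b a x) hk
  linarith [hf b hb a ha]

theorem upperEnvelope_sub_lowerEnvelope_le (x : X) :
    upperEnvelope s hs f k x - lowerEnvelope s hs f k x ≤ 2 * k * s.inf' hs (dist x ·) := by
  obtain ⟨x₀, hx₀, hx₀_eq⟩ := s.exists_mem_eq_inf' hs (dist x ·)
  have hupper : upperEnvelope s hs f k x ≤ f x₀ + k * dist x x₀ := s.inf'_le _ hx₀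
  have hlower : f x₀ - k * dist x x₀ ≤ lowerEnvelope s hs f k x :=
    s.le_sup' (fun x' => f x' - k * dist x x') hx₀
  rw [hx₀_eq]
  linarith

theorem apply_upperEnvelope_lowerEnvelope_le {L : ℝ → ℝ → ℝ} {μ : ℝ} (hμ : 0 ≤ μ)
    (hL : ∀ y y', L y y' ≤ μ * |y - y'|) (hk : 0 ≤ k)
    (hf : ∀ a ∈ s, ∀ b ∈ s, f a - f b ≤ k * dist a b) (x : X) :
    L (upperEnvelope s hs f k x) (lowerEnvelope s hs f k x)
      ≤ 2 * k * μ * s.inf' hs (dist x ·) := by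
  have hgap := upperEnvelope_sub_lowerEnvelope_le hs (f := f) (k := k) x
  calc L (upperEnvelope s hs f k x) (lowerEnvelope s hs f k x)
      ≤ μ * (upperEnvelope s hs f k x - lowerEnvelope s hs f k x) := by
        rw [← abs_of_nonneg (sub_nonneg.2 (lowerEnvelope_le_upperEnvelope hs hk hf x))]
        exact hL _ _
    _ ≤ μ * (2 * k * s.inf' hs (dist x ·)) := mul_le_mul_of_nonneg_left hgap hμ
    _ = 2 * k * μ * s.inf' hs (dist x ·) := by ring

end Envelopes

theorem stmt13_general {X : Type*} [MetricSpace X] (k μ : ℝ) (hk : 0 ≤ k) (L : ℝ → ℝ → ℝ)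
    (hLnonneg : ∀ y y', 0 ≤ L y y')
    (hLlip : ∀ y y', L y y' ≤ μ * |y - y'|)
    (f : X → ℝ) (hf : ∀ a b, |f a - f b| ≤ k * dist a b)
    (LK : Finset X) (hLK : LK.Nonempty) (U : Finset X) :
    (1 / U.card : ℝ) * ∑ x ∈ U,
        L (LK.inf' hLK (fun x' => f x' + k * dist x x'))
          (LK.sup' hLK (fun x' => f x' - k * dist x x'))
      ≤ (2 * k * μ / U.card) * ∑ x ∈ U, LK.inf' hLK (fun x' => dist x x') := by
  have hμ : 0 ≤ μ := by simpa using (hLnonneg 0 1).trans (hLlip 0 1)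
  have hpoint := apply_upperEnvelope_lowerEnvelope_le hLK hμ hLlip hk
    fun a _ b _ => (le_abs_self _).trans (hf a b)
  calc (1 / U.card : ℝ) * ∑ x ∈ U,
        L (LK.inf' hLK (fun x' => f x' + k * dist x x'))
          (LK.sup' hLK (fun x' => f x' - k * dist x x'))
      ≤ (1 / U.card : ℝ) * ∑ x ∈ U, 2 * k * μ * LK.inf' hLK (fun x' => dist x x') := by
        gcongr with x
        exact hpoint x
    _ = (2 * k * μ / U.card) * ∑ x ∈ U, LK.inf' hLK (fun x' => dist x x') := by
        rw [← Finset.mul_sum]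
        ring

/-- At `ε = 0`, the criterion of Theorem 2 is tighter than that of Theorem 1. -/
theorem stmt13 {X : Type*} [MetricSpace X] (k μ : ℝ) (hk : 0 ≤ k) (L : ℝ → ℝ → ℝ)
    (hLnonneg : ∀ y y', 0 ≤ L y y')
    (hLsymm : ∀ y y', L y y' = L y' y)
    (hLtri : ∀ a b c, L a c ≤ L a b + L b c)
    (hLlip : ∀ y y', L y y' ≤ μ * |y - y'|)
    (hLrefl : ∀ y, L y y = 0)
    (f : X → ℝ) (hf : ∀ a b, |f a - f b| ≤ k * dist a b)
    (LK : Finset X) (hLK : LK.Nonempty) (U : Finset X) :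
    (1 / U.card : ℝ) * ∑ x ∈ U,
        L (LK.inf' hLK (fun x' => f x' + k * dist x x'))
          (LK.sup' hLK (fun x' => f x' - k * dist x x'))
      ≤ (2 * k * μ / U.card) * ∑ x ∈ U, LK.inf' hLK (fun x' => dist x x') :=
  stmt13_general k μ hk L hLnonneg hLlip f hf LK hLK U
end

section
/- Let R be a random variable on [0,1] with CDF F(r) = r^p (p ≥ 1), let x be a uniform random point in the hypercube [−1,1]^p, let a ∈ [0,1], and let μ_a denote the mean ℓ∞-distance from the point x_a = (a, 0, …, 0) to a uniform point of the hypercube. Then μ_a ≥ (p/(p+1))(1−a)^{p+1} + (1/2)[p/(p+1) + (1−a)(p−1)/p − (1−a)^{p+1}(p/(p+1) + (p−1)/p)] + (a/2)(1 + a/2). -/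
open MeasureTheory

/-- Lower bound on the mean ℓ∞-distance from the point `x_a = (a,0,…,0)` to a uniform
point of the hypercube `[-1,1]^p`. -/
theorem stmt19 (p : ℕ) (hp : 1 ≤ p) (a : ℝ) (ha0 : 0 ≤ a) (ha1 : a ≤ 1)
    (μ : Measure (Fin p → ℝ))
    (hμ : μ = (volume (Set.univ.pi fun _ : Fin p => Set.Icc (-1 : ℝ) 1))⁻¹ •
      volume.restrict (Set.univ.pi fun _ : Fin p => Set.Icc (-1 : ℝ) 1))
    (xa : Fin p → ℝ) (hxa : xa = fun i : Fin p => if (i : ℕ) = 0 then a else 0) :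
    ∫ z, dist xa z ∂μ ≥
      (p / (p + 1) : ℝ) * (1 - a) ^ (p + 1)
      + (1 / 2) * ((p / (p + 1) : ℝ) + (1 - a) * ((p - 1) / p)
          - (1 - a) ^ (p + 1) * ((p / (p + 1) : ℝ) + (p - 1) / p))
      + (a / 2) * (1 + a / 2) := by
  obtain ⟨m, rfl⟩ : ∃ m, p = m + 1 := ⟨p - 1, (Nat.succ_pred_eq_of_pos hp).symm⟩
  set cube : Set (Fin (m+1) → ℝ) := Set.univ.pi fun _ => Set.Icc (-1 : ℝ) 1 with hcube
  have hcube_meas : MeasurableSet cube := MeasurableSet.univ_pi fun _ => measurableSet_Icc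
  have hV : volume cube = ENNReal.ofReal 2 ^ (m+1) := by
    rw [hcube, volume_pi_pi]; simp [Real.volume_Icc]; norm_num
  have hV0 : volume cube ≠ 0 := by rw [hV]; positivity
  have hVt : volume cube ≠ ⊤ := by rw [hV]; exact ENNReal.pow_ne_top ENNReal.ofReal_ne_top
  have hμuniv : μ Set.univ = 1 := by
    rw [hμ, Measure.smul_apply, Measure.restrict_apply MeasurableSet.univ, Set.univ_inter,
      smul_eq_mul, ENNReal.inv_mul_cancel hV0 hVt]
  haveI : IsFiniteMeasure μ := ⟨by rw [hμuniv]; exact ENNReal.one_lt_top⟩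
  -- measure of closed balls
  have hball : ∀ t : ℝ, 0 < t → t ≤ 1 + a →
      (μ {z | dist xa z ≤ t}).toReal
        = (min (a + t) 1 - max (a - t) (-1)) / 2 * (min t 1) ^ m := by
    intro t ht ht1
    have hset : {z : Fin (m+1) → ℝ | dist xa z ≤ t}
        = Set.univ.pi fun i => Set.Icc (xa i - t) (xa i + t) := by
      rw [show {z : Fin (m+1) → ℝ | dist xa z ≤ t} = Metric.closedBall xa t by
        ext z; simp [Metric.mem_closedBall, dist_comm], closedBall_pi xa ht.le]
      simp [Real.closedBall_eq_Icc]
    have hmeas : MeasurableSet (Set.univ.pi fun i => Set.Icc (xa i - t) (xa i + t)) :=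
      MeasurableSet.univ_pi fun _ => measurableSet_Icc
    have hc0 : (0:ℝ) ≤ min (a + t) 1 - max (a - t) (-1) := by
      have : max (a - t) (-1) ≤ min (a + t) 1 :=
        max_le (le_min (by linarith) (by linarith)) (le_min (by linarith) (by linarith))
      linarith
    have hvol : volume ((Set.univ.pi fun i => Set.Icc (xa i - t) (xa i + t)) ∩ cube)
        = ENNReal.ofReal (min (a + t) 1 - max (a - t) (-1))
          * ENNReal.ofReal (2 * min t 1) ^ m := by
      rw [hcube, ← Set.pi_inter_distrib, volume_pi_pi]
      have : ∀ i : Fin (m+1), volume (Set.Icc (xa i - t) (xa i + t) ∩ Set.Icc (-1:ℝ) 1)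
          = ENNReal.ofReal (min (xa i + t) 1 - max (xa i - t) (-1)) := by
        intro i; rw [Set.Icc_inter_Icc, Real.volume_Icc]
      simp_rw [this]
      rw [Fin.prod_univ_succ]
      congr 1
      · rw [hxa]; norm_num
      · rw [Finset.prod_congr rfl (fun i _ => ?_), Finset.prod_const, Finset.card_univ,
          Fintype.card_fin]
        rw [hxa]
        have : ((Fin.succ i : Fin (m+1)) : ℕ) ≠ 0 := by simp [Fin.val_succ]
        simp only [if_neg this, zero_add, zero_sub, max_neg_neg]
        congr 1
        ring
    rw [hset, hμ, Measure.smul_apply, Measure.restrict_apply hmeas, smul_eq_mul, hvol, hV]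
    rw [ENNReal.toReal_mul, ENNReal.toReal_inv, ENNReal.toReal_pow, ENNReal.toReal_mul,
      ENNReal.toReal_pow, ENNReal.toReal_ofReal (by norm_num : (0:ℝ) ≤ 2),
      ENNReal.toReal_ofReal hc0, ENNReal.toReal_ofReal (by positivity)]
    have h2 : (0:ℝ) < 2 ^ m := by positivity
    field_simp
    ring
  -- the tail function
  set G : ℝ → ℝ := fun t => 1 - (min (a + t) 1 - max (a - t) (-1)) / 2 * (min t 1) ^ m
    with hG
  have hfc : Continuous fun z : Fin (m+1) → ℝ => dist xa z :=
    Continuous.dist continuous_const continuous_id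
  have hfm : Measurable fun z : Fin (m+1) → ℝ => dist xa z := hfc.measurable
  have hbdd : ∀ᵐ z ∂μ, dist xa z ≤ 1 + a := by
    have hmem : ∀ᵐ z ∂μ, z ∈ cube := by
      rw [hμ]
      exact Measure.ae_smul_measure (ae_restrict_mem hcube_meas) _
    filter_upwards [hmem] with z hz
    rw [dist_pi_le_iff (by linarith)]
    intro i
    have hzi := hz i (Set.mem_univ i)
    simp only [Set.mem_Icc] at hzi
    have hxai : xa i = if (i:ℕ) = 0 then a else 0 := by rw [hxa]
    rw [Real.dist_eq, hxai]
    rcases eq_or_ne ((i:ℕ)) 0 with h | h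
    · rw [if_pos h, abs_le]; constructor <;> linarith [hzi.1, hzi.2]
    · rw [if_neg h, abs_le]; constructor <;> linarith [hzi.1, hzi.2]
  have hint : Integrable (fun z => dist xa z) μ := by
    refine Integrable.mono' (integrable_const (1 + a)) hfc.aestronglyMeasurable ?_
    filter_upwards [hbdd] with z hz
    rwa [Real.norm_eq_abs, abs_of_nonneg dist_nonneg]
  -- layer cake
  have hlc : ∫ z, dist xa z ∂μ
      = ∫ t in Set.Ioc 0 (1+a), (μ {z | t ≤ dist xa z}).toReal :=
    hint.integral_eq_integral_Ioc_meas_le (Filter.Eventually.of_forall fun z => dist_nonneg) hbdd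
  have hlc2 : ∫ t in Set.Ioc 0 (1+a), (μ {z | t ≤ dist xa z}).toReal
      = ∫ t in Set.Ioc 0 (1+a), (μ {z | t < dist xa z}).toReal := by
    apply integral_congr_ae
    filter_upwards [meas_le_ae_eq_meas_lt μ (volume.restrict (Set.Ioc 0 (1+a)))
      (fun z => dist xa z)] with t ht
    exact congrArg ENNReal.toReal ht
  have htail : ∀ t ∈ Set.Ioc (0:ℝ) (1+a), (μ {z | t < dist xa z}).toReal = G t := by
    rintro t ⟨ht0, ht1⟩
    have hmeasle : MeasurableSet {z : Fin (m+1) → ℝ | dist xa z ≤ t} :=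
      measurableSet_le hfm measurable_const
    have hcompl : {z : Fin (m+1) → ℝ | t < dist xa z} = {z | dist xa z ≤ t}ᶜ := by
      ext z; simp
    rw [hcompl, measure_compl hmeasle (measure_ne_top μ _), hμuniv,
      ENNReal.toReal_sub_of_le (by rw [← hμuniv]; exact measure_mono (Set.subset_univ _))
        ENNReal.one_ne_top,
      ENNReal.toReal_one, hball t ht0 ht1]
  have hlc3 : ∫ t in Set.Ioc 0 (1+a), (μ {z | t < dist xa z}).toReal
      = ∫ t in Set.Ioc (0:ℝ) (1+a), G t :=
    setIntegral_congr_fun measurableSet_Ioc fun t ht => htail t ht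
  have hGcont : Continuous G := by
    apply Continuous.sub continuous_const
    apply Continuous.mul
    · exact ((continuous_const.add continuous_id).min continuous_const |>.sub
        ((continuous_const.sub continuous_id).max continuous_const)).div_const 2
    · exact ((continuous_id.min continuous_const).pow m)
  have hIoc : ∫ t in Set.Ioc (0:ℝ) (1+a), G t = ∫ t in (0:ℝ)..(1+a), G t :=
    (intervalIntegral.integral_of_le (by linarith)).symm
  -- split the interval integral
  have hsplit : ∫ t in (0:ℝ)..(1+a), G t
      = (∫ t in (0:ℝ)..(1-a), G t) + (∫ t in (1-a:ℝ)..1, G t) + (∫ t in (1:ℝ)..(1+a), G t) := by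
    rw [intervalIntegral.integral_add_adjacent_intervals
        (hGcont.intervalIntegrable _ _) (hGcont.intervalIntegrable _ _),
      intervalIntegral.integral_add_adjacent_intervals
        (hGcont.intervalIntegrable _ _) (hGcont.intervalIntegrable _ _)]
  set b : ℝ := 1 - a with hb
  have hb0 : 0 ≤ b := by simp [hb]; linarith
  have hb1 : b ≤ 1 := by simp [hb]; linarith
  have hI1 : ∫ t in (0:ℝ)..b, G t = b - b ^ (m+2) / (m+2) := by
    have : ∫ t in (0:ℝ)..b, G t = ∫ t in (0:ℝ)..b, (1 - t ^ (m+1)) := by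
      apply intervalIntegral.integral_congr
      intro t ht
      rw [Set.uIcc_of_le hb0, Set.mem_Icc] at ht
      simp only [hG]
      have h1 : min (a + t) 1 = a + t := min_eq_left (by linarith [ht.2])
      have h2 : max (a - t) (-1) = a - t := max_eq_left (by linarith [ht.1])
      have h3 : min t 1 = t := min_eq_left (by linarith [ht.2])
      rw [h1, h2, h3]; ring
    rw [this, intervalIntegral.integral_sub intervalIntegrable_const
        (intervalIntegral.intervalIntegrable_pow _), integral_pow,
      intervalIntegral.integral_const]
    rw [zero_pow (by omega : m + 2 ≠ 0)]
    push_cast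
    simp only [smul_eq_mul]
    ring
  have hI2 : ∫ t in b..(1:ℝ), G t
      = (1 - b) - b/2 * ((1 - b^(m+1))/(m+1)) - (1/2) * ((1 - b^(m+2))/(m+2)) := by
    have : ∫ t in b..(1:ℝ), G t = ∫ t in b..(1:ℝ), (1 - b/2 * t^m - (1/2) * t^(m+1)) := by
      apply intervalIntegral.integral_congr
      intro t ht
      rw [Set.uIcc_of_le hb1, Set.mem_Icc] at ht
      simp only [hG]
      have h1 : min (a + t) 1 = 1 := min_eq_right (by simp only [hb] at ht; linarith [ht.1])
      have h2 : max (a - t) (-1) = a - t := max_eq_left (by linarith [ht.2])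
      have h3 : min t 1 = t := min_eq_left ht.2
      rw [h1, h2, h3]
      simp only [hb]
      ring
    rw [this, intervalIntegral.integral_sub (IntervalIntegrable.sub intervalIntegrable_const
        ((intervalIntegral.intervalIntegrable_pow _).const_mul _))
        ((intervalIntegral.intervalIntegrable_pow _).const_mul _),
      intervalIntegral.integral_sub intervalIntegrable_const
        ((intervalIntegral.intervalIntegrable_pow _).const_mul _),
      intervalIntegral.integral_const_mul, intervalIntegral.integral_const_mul,
      integral_pow, integral_pow,
      intervalIntegral.integral_const]
    push_cast
    simp only [smul_eq_mul]
    ring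
  have hI3 : ∫ t in (1:ℝ)..(1+a), G t = a^2/4 := by
    have : ∫ t in (1:ℝ)..(1+a), G t = ∫ t in (1:ℝ)..(1+a), ((1 + a)/2 - t/2) := by
      apply intervalIntegral.integral_congr
      intro t ht
      rw [Set.uIcc_of_le (by linarith), Set.mem_Icc] at ht
      simp only [hG]
      have h1 : min (a + t) 1 = 1 := min_eq_right (by linarith [ht.1])
      have h2 : max (a - t) (-1) = a - t := max_eq_left (by linarith [ht.2])
      have h3 : min t 1 = 1 := min_eq_right ht.1
      rw [h1, h2, h3]
      ring
    rw [this, intervalIntegral.integral_sub intervalIntegrable_const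
        (intervalIntegral.intervalIntegrable_id.div_const 2)]
    simp only [intervalIntegral.integral_div, integral_id,
      intervalIntegral.integral_const]
    simp only [smul_eq_mul]
    ring
  -- put it together
  rw [ge_iff_le, hlc, hlc2, hlc3, hIoc, hsplit, hI1, hI2, hI3]
  apply le_of_eq
  have hm1 : ((m:ℝ) + 1) ≠ 0 := by positivity
  have hm2 : ((m:ℝ) + 2) ≠ 0 := by positivity
  push_cast
  simp only [hb]
  field_simp
  ring
end
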